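/- arXiv:1407.6124 — 3 statements merged into one kernel-verified Lean document; each statement's English description precedes it below -/
import Mathlib

section
/- Every right-recursing list segment is a left-recursing list segment: if lsR(x, y, L) holds then lsL(x, y, L) holds. -/
abbrev Heap : Type := Finmap (fun _ : ℤ => ℤ)


/-- Right-recursing list segment: `lsR x y L`. -/
inductive lsR : ℤ → ℤ → Heap → Prop
  | nil (x : ℤ) : lsR x x ∅
  | cons (x y t : ℤ) (L₁ : Heap) (hne : x ≠ y)
      (hd : (Finmap.singleton x t).Disjoint L₁)
      (h : lsR t y L₁) : lsR x y (Finmap.singleton x t ∪ L₁)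


/-- Left-recursing list segment: `lsL x y L`. -/
inductive lsL : ℤ → ℤ → Heap → Prop
  | nil (x : ℤ) : lsL x x ∅
  | cons (x y t : ℤ) (L₁ : Heap) (hne : x ≠ y)
      (hd : (Finmap.singleton t y).Disjoint L₁)
      (h : lsL x t L₁) : lsL x y (Finmap.singleton t y ∪ L₁)

lemma lsL_cons_front (x y t : ℤ) (L₁ : Heap) (hne : x ≠ y)
    (hd : (Finmap.singleton x t).Disjoint L₁) (h : lsL t y L₁) :
    lsL x y (Finmap.singleton x t ∪ L₁) := by
  induction h with
  | nil =>
      have : lsL x t (Finmap.singleton x t ∪ ∅) :=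
        lsL.cons x t x ∅ hne (by intro a _ hb; simp [Finmap.notMem_empty] at hb) (lsL.nil x)
      simpa using this
  | cons y s L₂ hne' hd' h ih =>
      have hxmem : x ∉ Finmap.singleton s y ∪ L₂ := fun hm => hd x (by simp) hm
      have hxs : x ≠ s := fun hxs => hxmem (by simp [hxs])
      have hxL₂ : (Finmap.singleton x t).Disjoint L₂ := by
        intro a ha hb
        simp at ha
        subst ha
        exact hxmem (by simp [hb])
      have hsx : (Finmap.singleton s y).Disjoint (Finmap.singleton x t ∪ L₂) := by
        intro a ha hb
        simp at ha hb
        rcases hb with hb | hb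
        · omega
        · exact hd' a (by simp [ha]) hb
      have key : lsL x y (Finmap.singleton s y ∪ (Finmap.singleton x t ∪ L₂)) :=
        lsL.cons x y s _ hne hsx (ih hxs hxL₂)
      have hds : (Finmap.singleton x t : Heap).Disjoint (Finmap.singleton s y) := by
        intro a ha hb
        simp at ha hb
        omega
      have heq : Finmap.singleton x t ∪ (Finmap.singleton s y ∪ L₂)
          = Finmap.singleton s y ∪ (Finmap.singleton x t ∪ L₂) :=
        calc Finmap.singleton x t ∪ (Finmap.singleton s y ∪ L₂)
            = (Finmap.singleton x t ∪ Finmap.singleton s y) ∪ L₂ :=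
              Finmap.union_assoc.symm
          _ = (Finmap.singleton s y ∪ Finmap.singleton x t) ∪ L₂ := by
              rw [Finmap.union_comm_of_disjoint hds]
          _ = Finmap.singleton s y ∪ (Finmap.singleton x t ∪ L₂) :=
              Finmap.union_assoc
      rw [heq]
      exact key

theorem lsR_imp_lsL (x y : ℤ) (L : Heap) (h : lsR x y L) : lsL x y L := by
  induction h with
  | nil x => exact lsL.nil x
  | cons x y t L₁ hne hd h ih => exact lsL_cons_front x y t L₁ hne hd ih
end

section
/- Composition of list segments with length: if lsR₁(x, y, len₁, L₁) and lsR₁(y, z, len₂, L₂) hold with L₁, L₂ disjoint, and z does not occur in the domain of L₁, then lsR₁(x, z, len₁ + len₂, L₁ ⊎ L₂) holds. -/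
/-- Right-recursing list segment with length: `lsR₁ x y n L`. -/
inductive lsR₁ : ℤ → ℤ → ℕ → Heap → Prop
  | nil (x : ℤ) : lsR₁ x x 0 ∅
  | cons (x y t : ℤ) (m : ℕ) (L₁ : Heap) (hne : x ≠ y)
      (hd : (Finmap.singleton x t).Disjoint L₁)
      (h : lsR₁ t y m L₁) : lsR₁ x y (m + 1) (Finmap.singleton x t ∪ L₁)

theorem lsR₁_compose (x y z : ℤ) (len₁ len₂ : ℕ) (L₁ L₂ : Heap)
    (h₁ : lsR₁ x y len₁ L₁) (h₂ : lsR₁ y z len₂ L₂)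
    (hd : L₁.Disjoint L₂) (hz : z ∉ L₁) :
    lsR₁ x z (len₁ + len₂) (L₁ ∪ L₂) := by
  induction h₁ with
  | nil a =>
    simpa using h₂
  | cons a b t m M hne hds h ih =>
    have hxM : a ∈ Finmap.singleton a t ∪ M := by simp
    have hz' : z ∉ M := fun hm => hz (by simp [hm])
    have hza : a ≠ z := fun h' => hz (h' ▸ hxM)
    have hdM : M.Disjoint L₂ := fun k hk => hd k (by simp [hk])
    have hds2 : (Finmap.singleton a t).Disjoint (M ∪ L₂) := by
      intro k hk
      simp only [Finmap.mem_union]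
      rintro (hm | hm)
      · exact hds k hk hm
      · exact hd k (Finmap.mem_union.mpr (Or.inl hk)) hm
    have := lsR₁.cons a z t (m + len₂) (M ∪ L₂) hza hds2 (ih h₂ hdM hz')
    simpa [Finmap.union_assoc, Nat.add_right_comm] using this
end

section
/- Appending doubly-linked list segments: if dls(x, px, y, py, L₁) and dls(y, py, z, pz, L₂) hold with L₁, L₂ disjoint (and z not a node of L₁), then dls(x, px, z, pz, L₁ ⊎ L₂) holds. -/
abbrev Heap2 : Type := Finmap (fun _ : ℤ => ℤ × ℤ)

/-- Doubly-linked list segment: `dls x px y py L`, nodes store (prev, next). -/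
inductive dls : ℤ → ℤ → ℤ → ℤ → Heap2 → Prop
  | nil (x px : ℤ) : dls x px x px ∅
  | cons (x px y py t : ℤ) (L₁ : Heap2) (hne : x ≠ y)
      (hd : (Finmap.singleton x (px, t)).Disjoint L₁)
      (h : dls t x y py L₁) : dls x px y py (Finmap.singleton x (px, t) ∪ L₁)

theorem dls_append (x px y py z pz : ℤ) (L₁ L₂ : Heap2)
    (h₁ : dls x px y py L₁) (h₂ : dls y py z pz L₂)
    (hd : L₁.Disjoint L₂) (hz : z ∉ L₁) :
    dls x px z pz (L₁ ∪ L₂) := by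
  induction h₁ with
  | nil x px => simpa using h₂
  | cons x px y py t L hne hds h ih =>
    have hmem : x ∈ Finmap.singleton x (px, t) ∪ L := by
      simp [Finmap.mem_union]
    have hxz : x ≠ z := fun he => hz (he ▸ hmem)
    have hdL : L.Disjoint L₂ := fun a ha => hd a (by simp [Finmap.mem_union, ha])
    have hdS : (Finmap.singleton x (px, t)).Disjoint L₂ := fun a ha =>
      hd a (by simp [Finmap.mem_union, ha])
    have hzL : z ∉ L := fun hzl => hz (by simp [Finmap.mem_union, hzl])
    have := dls.cons x px z pz t (L ∪ L₂) hxz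
      (by
        intro a ha
        simp only [Finmap.mem_union]
        push_neg
        exact ⟨hds a ha, hdS a ha⟩)
      (ih h₂ hdL hzL)
    simpa [Finmap.union_assoc] using this
end
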